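/- arXiv:1711.02695 — 5 statements merged into one kernel-verified Lean document; each statement's English description precedes it below -/
import Mathlib

section
/- Let L be a finite index set and f : [0,1]^L → ℝ be an aggregation function that is symmetric (invariant under permutations of coordinates), monotone (pointwise s' ≥ s implies f(s') ≥ f(s)), homogeneous (f(λ·s) = λ f(s) for all λ ≥ 0 with λ·s ∈ [0,1]^L), and independent (for any partition L = J ∪ K, f(s_J, s_K) - f(s_J, s'_K) = f(s'_J, s_K) - f(s'_J, s'_K)). Then there exists λ ≥ 0 such that f(s) = λ · ∑_{l∈L} s_l for all s. Conversely, every such scaled sum satisfies these four properties. -/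
open Finset

/-!
Applying independence with `J = {a}` to `s` and `0` shows
`f (s_a, s_S) - f (0, s_S) = f (s_a, 0) - f 0`, so coordinates can be peeled off one at a time:
`f s = ∑ l, f (s l • e_l)`. Homogeneity turns each term into `s l * f e_l`, symmetry makes
`f e_l` independent of `l`, and monotonicity (with `f 0 = 0`) makes it nonnegative.
-/

/-- `s` lies in the domain `[0,1]^L`. -/
def InDom {L : Type*} (s : L → ℝ) : Prop := ∀ l, 0 ≤ s l ∧ s l ≤ 1

/-- combine coordinates: those in `J` from `u`, the rest from `v`. -/
def combine {L : Type*} (J : Finset L) [DecidableEq L] (u v : L → ℝ) : L → ℝ :=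
  fun l => if l ∈ J then u l else v l

def Symmetric' {L : Type*} (f : (L → ℝ) → ℝ) : Prop :=
  ∀ (π : Equiv.Perm L) (s : L → ℝ), InDom s → f (s ∘ π) = f s

def Monotone' {L : Type*} (f : (L → ℝ) → ℝ) : Prop :=
  ∀ s s' : L → ℝ, InDom s → InDom s' → (∀ l, s l ≤ s' l) → f s ≤ f s'

def Homogeneous' {L : Type*} (f : (L → ℝ) → ℝ) : Prop :=
  ∀ (c : ℝ) (s : L → ℝ), 0 ≤ c → InDom s → InDom (fun l => c * s l) →
    f (fun l => c * s l) = c * f s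

def Independent' {L : Type*} [DecidableEq L] (f : (L → ℝ) → ℝ) : Prop :=
  ∀ (J : Finset L) (u u' v v' : L → ℝ), InDom u → InDom u' → InDom v → InDom v' →
    f (combine J u v) - f (combine J u v') = f (combine J u' v) - f (combine J u' v')

section AggregationFunction

variable {L : Type*} {f : (L → ℝ) → ℝ}

lemma inDom_zero : InDom (0 : L → ℝ) := fun _ => ⟨le_rfl, zero_le_one⟩

lemma inDom_single [DecidableEq L] (l : L) {t : ℝ} (h0 : 0 ≤ t) (h1 : t ≤ 1) :
    InDom (Pi.single l t) := by
  intro x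
  rcases eq_or_ne x l with rfl | hx
  · simp [h0, h1]
  · simp [hx]

lemma InDom.combine [DecidableEq L] (J : Finset L) {u v : L → ℝ} (hu : InDom u) (hv : InDom v) :
    InDom (combine J u v) := by
  intro l
  unfold _root_.combine
  split
  exacts [hu l, hv l]

lemma sum_combine [Fintype L] [DecidableEq L] (J : Finset L) (u v : L → ℝ) :
    ∑ l, combine J u v l = ∑ l ∈ J, u l + ∑ l ∈ Jᶜ, v l := by
  rw [← sum_add_sum_compl J]
  congr 1 <;> refine sum_congr rfl fun l hl => ?_
  · simp [combine, hl]
  · simp [combine, mem_compl.mp hl]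

namespace Homogeneous'

lemma map_zero (hf : Homogeneous' f) : f 0 = 0 := by
  have h := hf 0 0 le_rfl inDom_zero fun _ => by simp
  simp only [Pi.zero_apply, mul_zero, zero_mul] at h
  exact h

lemma map_single [DecidableEq L] (hf : Homogeneous' f) (l : L) {t : ℝ} (h0 : 0 ≤ t)
    (h1 : t ≤ 1) :
    f (Pi.single l t) = t * f (Pi.single l 1) := by
  have hscale : (fun x => t * (Pi.single l 1 : L → ℝ) x) = Pi.single l t := by
    ext x
    rcases eq_or_ne x l with rfl | hx <;> simp [*]
  rw [← hf t _ h0 (inDom_single l zero_le_one le_rfl) (hscale ▸ inDom_single l h0 h1), hscale]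

end Homogeneous'

lemma Symmetric'.map_single_one [DecidableEq L] (hf : Symmetric' f) (l l' : L) :
    f (Pi.single l 1) = f (Pi.single l' 1) := by
  have hswap : Pi.single l' (1 : ℝ) ∘ Equiv.swap l l' = Pi.single l 1 := by
    rw [Pi.single, Function.update_comp_equiv, Equiv.symm_swap, Equiv.swap_apply_right]
    rfl
  rw [← hswap, hf _ _ (inDom_single l' zero_le_one le_rfl)]

lemma Monotone'.map_single_one_nonneg [DecidableEq L] (hmon : Monotone' f)
    (hhom : Homogeneous' f) (l : L) : 0 ≤ f (Pi.single l 1) := by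
  have hle := hmon 0 (Pi.single l 1) inDom_zero (inDom_single l zero_le_one le_rfl)
    (fun x => (inDom_single l zero_le_one le_rfl x).1)
  rwa [hhom.map_zero] at hle

lemma Independent'.map_combine_zero [DecidableEq L] (hind : Independent' f)
    (hhom : Homogeneous' f) {s : L → ℝ} (hs : InDom s) (S : Finset L) :
    f (combine S s 0) = ∑ l ∈ S, f (Pi.single l (s l)) := by
  induction S using Finset.induction_on with
  | empty =>
    have hempty : combine (∅ : Finset L) s 0 = 0 := by ext; simp [combine]
    rw [hempty, hhom.map_zero, sum_empty]
  | insert a S ha ih =>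
    have key := hind {a} s 0 (combine S s 0) 0 hs inDom_zero (hs.combine S inDom_zero) inDom_zero
    have e1 : combine {a} s (combine S s 0) = combine (insert a S) s 0 := by
      ext l; by_cases h : l = a <;> simp [combine, h]
    have e2 : combine {a} s 0 = Pi.single a (s a) := by
      ext l; by_cases h : l = a <;> simp [combine, h]
    have e3 : combine {a} 0 (combine S s 0) = combine S s 0 := by
      ext l; by_cases h : l = a <;> simp [combine, h, ha]
    have e4 : combine {a} (0 : L → ℝ) 0 = 0 := by ext; simp [combine]
    rw [e1, e2, e3, e4, hhom.map_zero] at key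
    rw [sum_insert ha, ← ih]
    linarith

lemma map_eq_sum_mul [Fintype L] [DecidableEq L] (hhom : Homogeneous' f)
    (hind : Independent' f) {s : L → ℝ} (hs : InDom s) :
    f s = ∑ l, s l * f (Pi.single l 1) := by
  have huniv : combine univ s 0 = s := by ext; simp [combine]
  conv_lhs => rw [← huniv]
  rw [hind.map_combine_zero hhom hs univ]
  exact sum_congr rfl fun l _ => hhom.map_single l (hs l).1 (hs l).2

lemma exists_eq_mul_sum [Fintype L] [DecidableEq L] (hsym : Symmetric' f)
    (hmon : Monotone' f) (hhom : Homogeneous' f) (hind : Independent' f) :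
    ∃ lam : ℝ, 0 ≤ lam ∧ ∀ s : L → ℝ, InDom s → f s = lam * ∑ l, s l := by
  rcases isEmpty_or_nonempty L with hL | ⟨⟨l₀⟩⟩
  · refine ⟨0, le_rfl, fun s hs => ?_⟩
    simp [map_eq_sum_mul hhom hind hs]
  · refine ⟨f (Pi.single l₀ 1), hmon.map_single_one_nonneg hhom l₀, fun s hs => ?_⟩
    rw [map_eq_sum_mul hhom hind hs, mul_sum]
    exact sum_congr rfl fun l _ => by rw [hsym.map_single_one l l₀, mul_comm]

section ScaledSum

variable [Fintype L] {lam : ℝ}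

lemma symmetric'_of_eq_mul_sum (hf : ∀ s, InDom s → f s = lam * ∑ l, s l) : Symmetric' f := by
  intro π s hs
  rw [hf (s ∘ π) fun l => hs (π l), hf s hs, ← Equiv.sum_comp π s]
  rfl

lemma monotone'_of_eq_mul_sum (hf : ∀ s, InDom s → f s = lam * ∑ l, s l) (hlam : 0 ≤ lam) :
    Monotone' f := by
  intro s s' hs hs' hle
  rw [hf _ hs, hf _ hs']
  exact mul_le_mul_of_nonneg_left (sum_le_sum fun l _ => hle l) hlam

lemma homogeneous'_of_eq_mul_sum (hf : ∀ s, InDom s → f s = lam * ∑ l, s l) :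
    Homogeneous' f := by
  intro c s _ hs hcs
  rw [hf _ hs, hf _ hcs, ← mul_sum]
  ring

lemma independent'_of_eq_mul_sum [DecidableEq L] (hf : ∀ s, InDom s → f s = lam * ∑ l, s l) :
    Independent' f := by
  intro J u u' v v' hu hu' hv hv'
  rw [hf _ (hu.combine J hv), hf _ (hu.combine J hv'), hf _ (hu'.combine J hv),
    hf _ (hu'.combine J hv'), sum_combine, sum_combine, sum_combine, sum_combine]
  ring

end ScaledSum

end AggregationFunction

/-- a regular symmetric aggregation function on a finite index set
is a nonnegative multiple of the sum, and conversely. -/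
theorem stmt0 {L : Type*} [Fintype L] [DecidableEq L] (f : (L → ℝ) → ℝ) :
    (Symmetric' f ∧ Monotone' f ∧ Homogeneous' f ∧ Independent' f) ↔
    ∃ lam : ℝ, 0 ≤ lam ∧ ∀ s : L → ℝ, InDom s → f s = lam * ∑ l, s l := by
  constructor
  · rintro ⟨hsym, hmon, hhom, hind⟩
    exact exists_eq_mul_sum hsym hmon hhom hind
  · rintro ⟨lam, hlam, hf⟩
    exact ⟨symmetric'_of_eq_mul_sum hf, monotone'_of_eq_mul_sum hf hlam,
      homogeneous'_of_eq_mul_sum hf, independent'_of_eq_mul_sum hf⟩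
end

section
/- Let PI be a bilateral measure of influence between papers with nonnegative values such that each author b has P'_b := ∑_{p∈P} ∑_{q∈P_b} PI(p,q) > 0. Let AI(a,b) = g((PI(p,q))_{(p,q)∈P_a×P_b}) be a normalized bilateral author measure (∑_{a∈A} AI(a,b) = 1 for all b), where g is an aggregation function on [0,1]^(P_a×P_b). Then g is monotone, homogeneous, independent, and symmetric if and only if AI(a,b) = (1/P'_b) ∑_{p∈P_a} ∑_{q∈P_b} PI(p,q). -/
open Finset

section Aux
variable {L : Type*} [Fintype L] [DecidableEq L]

def eL (l : L) : L → ℝ := fun x => if x = l then 1 else 0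

lemma indom_eL (l : L) : InDom (eL l) := by
  intro x; unfold eL; split <;> norm_num

lemma indom_zero : InDom (fun _ : L => (0:ℝ)) := fun _ => ⟨le_rfl, zero_le_one⟩

lemma indom_ite {s : L → ℝ} (hs : InDom s) (p : L → Prop) [DecidablePred p] :
    InDom (fun l => if p l then s l else 0) := by
  intro l; dsimp only; split
  · exact hs l
  · exact ⟨le_rfl, zero_le_one⟩

lemma f_zero {f : (L → ℝ) → ℝ} (hH : Homogeneous' f) : f (fun _ => 0) = 0 := by
  have h := hH 0 (fun _ => 0) le_rfl indom_zero (by simpa using indom_zero)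
  simpa using h

lemma add_decomp {f : (L → ℝ) → ℝ} (hH : Homogeneous' f) (hI : Independent' f)
    (s : L → ℝ) (hs : InDom s) (T : Finset L) :
    f (fun l => if l ∈ T then s l else 0) = ∑ l ∈ T, f (fun x => if x = l then s l else 0) := by
  induction T using Finset.induction_on with
  | empty => simpa using f_zero hH
  | @insert a T' ha ih =>
    have key := hI {a} s (fun _ => 0) (fun l => if l ∈ T' then s l else 0) (fun _ => 0)
      hs indom_zero (indom_ite hs _) indom_zero
    have e1 : combine {a} s (fun l => if l ∈ T' then s l else 0)
        = fun l => if l ∈ insert a T' then s l else 0 := by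
      funext l
      by_cases h : l = a <;> simp [combine, h, ha]
    have e2 : combine {a} s (fun _ : L => (0:ℝ)) = fun x => if x = a then s x else 0 := by
      funext l; by_cases h : l = a <;> simp [combine, h]
    have e3 : combine {a} (fun _ : L => (0:ℝ)) (fun l => if l ∈ T' then s l else 0)
        = fun l => if l ∈ T' then s l else 0 := by
      funext l; by_cases h : l = a <;> simp [combine, h, ha]
    have e4 : combine {a} (fun _ : L => (0:ℝ)) (fun _ : L => (0:ℝ)) = fun _ => (0:ℝ) := by
      funext l; simp [combine]
    rw [e1, e2, e3, e4, f_zero hH] at key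
    have single : (fun x => if x = a then s x else 0) = fun x => if x = a then s a else 0 := by
      funext x; by_cases h : x = a <;> simp [h]
    rw [Finset.sum_insert ha, ← ih]
    rw [single] at key
    linarith [key]

lemma swap_comp (l l' : L) : eL l ∘ (Equiv.swap l l') = eL l' := by
  funext x
  simp only [Function.comp_apply, eL]
  by_cases h : x = l'
  · simp [h, Equiv.swap_apply_right]
  · have : Equiv.swap l l' x ≠ l := by
      intro hc
      have := (Equiv.swap l l').injective (a₁ := x) (a₂ := l')
      apply h
      apply (Equiv.swap l l').injective
      rw [hc, Equiv.swap_apply_right]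
    simp [h, this]

lemma repr_lemma {f : (L → ℝ) → ℝ} (hM : Monotone' f) (hH : Homogeneous' f)
    (hI : Independent' f) (hS : Symmetric' f) :
    ∃ lam : ℝ, 0 ≤ lam ∧ ∀ s, InDom s → f s = lam * ∑ x, s x := by
  have hsingle : ∀ (s : L → ℝ), InDom s → ∀ l,
      f (fun x => if x = l then s l else 0) = s l * f (eL l) := by
    intro s hs l
    have h := hH (s l) (eL l) (hs l).1 (indom_eL l) (by
      intro x; unfold eL; dsimp only; split
      · simpa using hs l
      · simpa using ⟨le_rfl, zero_le_one⟩)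
    rw [← h]
    congr 1
    funext x
    unfold eL
    by_cases hx : x = l <;> simp [hx]
  have heq : ∀ l l' : L, f (eL l) = f (eL l') := by
    intro l l'
    have := hS (Equiv.swap l l') (eL l) (indom_eL l)
    rw [swap_comp] at this
    exact this.symm
  by_cases hne : Nonempty L
  · obtain ⟨l0⟩ := hne
    refine ⟨f (eL l0), ?_, ?_⟩
    · have := hM (fun _ => 0) (eL l0) indom_zero (indom_eL l0)
        (fun x => (indom_eL l0 x).1)
      rw [f_zero hH] at this; exact this
    · intro s hs
      have h1 : f s = ∑ l, f (fun x => if x = l then s l else 0) := by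
        have := add_decomp hH hI s hs Finset.univ
        simpa using this
      rw [h1, Finset.mul_sum]
      apply Finset.sum_congr rfl
      intro l _
      rw [hsingle s hs l, heq l l0]
      ring
  · refine ⟨0, le_rfl, fun s hs => ?_⟩
    have h1 : f s = ∑ l, f (fun x => if x = l then s l else 0) := by
      have := add_decomp hH hI s hs Finset.univ
      simpa using this
    haveI : IsEmpty L := not_nonempty_iff.mp hne
    rw [h1]
    simp
end Aux


/-- given a nonnegative bilateral paper influence `PI` with values
in `[0,1]` and `P'_b > 0` for each author `b`, a normalized author measure
`AI(a,b) = g((PI(p,q))_{(p,q) ∈ P_a × P_b})` comes from a monotone, homogeneous,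
independent and symmetric aggregation function `g` iff `g` is a scaled sum, in
which case `AI(a,b) = (1/P'_b) ∑_{p∈P_a} ∑_{q∈P_b} PI(p,q)`. -/
theorem stmt10 {A P : Type*} [Fintype A] [DecidableEq A] [Fintype P] [DecidableEq P]
    (auth : P → A) (PI : P → P → ℝ) (hPI : ∀ p q, 0 ≤ PI p q ∧ PI p q ≤ 1)
    (Pprime : A → ℝ)
    (hPp : ∀ b, Pprime b = ∑ p, ∑ q ∈ univ.filter fun q => auth q = b, PI p q)
    (hPpos : ∀ b, 0 < Pprime b)
    (g : (P × P → ℝ) → ℝ) (AI : A → A → ℝ)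
    (hAI : ∀ a b, AI a b =
      g (fun x => if auth x.1 = a ∧ auth x.2 = b then PI x.1 x.2 else 0))
    (hnorm : ∀ b, ∑ a, AI a b = 1) :
    (Monotone' g ∧ Homogeneous' g ∧ Independent' g ∧ Symmetric' g) ↔
    (∃ lam : ℝ, 0 ≤ lam ∧ (∀ s : P × P → ℝ, InDom s → g s = lam * ∑ x, s x)) ∧
      (∀ a b, AI a b = (1 / Pprime b) *
        ∑ p ∈ univ.filter fun p => auth p = a,
          ∑ q ∈ univ.filter fun q => auth q = b, PI p q) := by
  have hsab : ∀ a b : A, InDom (fun x : P × P =>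
      if auth x.1 = a ∧ auth x.2 = b then PI x.1 x.2 else 0) := by
    intro a b x; dsimp only; split
    · exact hPI x.1 x.2
    · exact ⟨le_rfl, zero_le_one⟩
  have hsum : ∀ a b : A, (∑ x : P × P,
      if auth x.1 = a ∧ auth x.2 = b then PI x.1 x.2 else 0) =
      ∑ p ∈ univ.filter fun p => auth p = a,
        ∑ q ∈ univ.filter fun q => auth q = b, PI p q := by
    intro a b
    rw [Fintype.sum_prod_type]
    rw [Finset.sum_filter]
    apply Finset.sum_congr rfl
    intro p _
    by_cases h : auth p = a <;> simp [h, Finset.sum_filter]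
  constructor
  · rintro ⟨hM, hH, hI, hS⟩
    obtain ⟨lam, hlam0, hrep⟩ := repr_lemma hM hH hI hS
    refine ⟨⟨lam, hlam0, hrep⟩, ?_⟩
    have hAI' : ∀ a b, AI a b = lam *
        ∑ p ∈ univ.filter fun p => auth p = a,
          ∑ q ∈ univ.filter fun q => auth q = b, PI p q := by
      intro a b
      rw [hAI a b, hrep _ (hsab a b), hsum a b]
    intro a b
    have hlamb : lam * Pprime b = 1 := by
      have h1 := hnorm b
      have h2 : ∑ a, AI a b = lam * Pprime b := by
        rw [hPp b]
        have : ∀ a, AI a b = lam * ∑ p ∈ univ.filter fun p => auth p = a,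
            ∑ q ∈ univ.filter fun q => auth q = b, PI p q := fun a => hAI' a b
        rw [Finset.sum_congr rfl fun a _ => this a, ← Finset.mul_sum]
        congr 1
        rw [Finset.sum_fiberwise univ auth (fun p => ∑ q ∈ univ.filter fun q => auth q = b, PI p q)]
      rw [h2] at h1; exact h1
    have hlameq : lam = 1 / Pprime b := by
      rw [eq_div_iff (hPpos b).ne']
      linarith [hlamb]
    rw [hAI' a b, hlameq]
  · rintro ⟨⟨lam, hlam0, hrep⟩, hform⟩
    refine ⟨?_, ?_, ?_, ?_⟩
    · intro s s' hs hs' hle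
      rw [hrep s hs, hrep s' hs']
      exact mul_le_mul_of_nonneg_left (Finset.sum_le_sum fun x _ => hle x) hlam0
    · intro c s hc hs hcs
      rw [hrep _ hcs, hrep s hs, ← Finset.mul_sum]
      ring
    · intro J u u' v v' hu hu' hv hv'
      have hcomb : ∀ w w' : P × P → ℝ, InDom w → InDom w' → InDom (combine J w w') := by
        intro w w' hw hw' x
        unfold combine; split
        · exact hw x
        · exact hw' x
      have hcsum : ∀ w w' : P × P → ℝ, ∑ x, combine J w w' x =
          (∑ x ∈ univ.filter (· ∈ J), w x) + ∑ x ∈ univ.filter (¬ · ∈ J), w' x := by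
        intro w w'
        simp [combine, Finset.sum_ite]
      rw [hrep _ (hcomb u v hu hv), hrep _ (hcomb u v' hu hv'),
        hrep _ (hcomb u' v hu' hv), hrep _ (hcomb u' v' hu' hv'),
        hcsum, hcsum, hcsum, hcsum]
      ring
    · intro π s hs
      have hsπ : InDom (s ∘ π) := fun l => hs (π l)
      rw [hrep _ hsπ, hrep s hs]
      congr 1
      exact Equiv.sum_comp π s
end

section
/- Let AI be a normalized bilateral measure of influence between authors (∑_{a∈A} AI(a,b) = 1 for each b, with AI(a,b) ∈ [0,1]) and let I be a normalized measure of influence ((1/|A|) ∑_{a∈A} I(a) = 1) of the form I(a) = h((AI(a,b))_{b∈A}) for an aggregation function h on [0,1]^A. Then h is monotone, homogeneous, independent, and symmetric if and only if I(a) = ∑_{b∈A} AI(a,b) for all a. -/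
open Finset

lemma inDom_zero_s11 {L : Type*} : InDom (fun _ : L => (0:ℝ)) := fun _ => ⟨le_rfl, zero_le_one⟩

lemma inDom_combine {L : Type*} [DecidableEq L] {J : Finset L} {u v : L → ℝ}
    (hu : InDom u) (hv : InDom v) : InDom (combine J u v) := by
  intro l
  unfold combine
  split_ifs
  · exact hu l
  · exact hv l

lemma hsum_aux {A : Type*} [DecidableEq A] {h : (A → ℝ) → ℝ}
    (hInd : Independent' h) (h0 : h (fun _ => 0) = 0)
    {s : A → ℝ} (hs : InDom s) (J : Finset A) :
    h (combine J s (fun _ => 0)) = ∑ l ∈ J, h (combine {l} s (fun _ => 0)) := by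
  induction J using Finset.induction_on with
  | empty =>
    have : combine (∅ : Finset A) s (fun _ => 0) = (fun _ => (0:ℝ)) := by
      funext x; simp [combine]
    rw [this, h0, Finset.sum_empty]
  | @insert a J ha ih =>
    have hv : InDom (combine J s (fun _ => (0:ℝ))) := inDom_combine hs inDom_zero_s11
    have key := hInd {a} s (fun _ => 0) (combine J s (fun _ => 0)) (fun _ => 0)
      hs inDom_zero_s11 hv inDom_zero_s11
    have eq1 : combine {a} s (combine J s (fun _ => 0)) = combine (insert a J) s (fun _ => 0) := by
      funext x; by_cases hx : x = a <;> simp [combine, hx]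
    have eq2 : combine {a} (fun _ => (0:ℝ)) (combine J s (fun _ => 0)) = combine J s (fun _ => 0) := by
      funext x; by_cases hx : x = a <;> simp [combine, hx, ha]
    have eq3 : combine {a} (fun _ => (0:ℝ)) (fun _ => (0:ℝ)) = (fun _ => (0:ℝ)) := by
      funext x; simp [combine]
    rw [eq1, eq2, eq3, h0] at key
    rw [Finset.sum_insert ha, ← ih]
    linarith

/-- for a normalized bilateral author measure `AI` with values in
`[0,1]` and a normalized influence index `I(a) = h((AI(a,b))_{b∈A})`, the
aggregation function `h` is monotone, homogeneous, independent and symmetric iff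
it is the sum on the domain, in which case `I(a) = ∑_b AI(a,b)`. -/
theorem stmt11 {A : Type*} [Fintype A] [DecidableEq A] [Nonempty A]
    (AI : A → A → ℝ) (hAI01 : ∀ a b, 0 ≤ AI a b ∧ AI a b ≤ 1)
    (hAInorm : ∀ b, ∑ a, AI a b = 1)
    (h : (A → ℝ) → ℝ) (I : A → ℝ)
    (hI : ∀ a, I a = h (fun b => AI a b))
    (hInorm : (1 / (Fintype.card A : ℝ)) * ∑ a, I a = 1) :
    (Monotone' h ∧ Homogeneous' h ∧ Independent' h ∧ Symmetric' h) ↔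
    ((∀ s : A → ℝ, InDom s → h s = ∑ b, s b) ∧ ∀ a, I a = ∑ b, AI a b) := by
  have hcard : (Fintype.card A : ℝ) ≠ 0 := Nat.cast_ne_zero.mpr Fintype.card_ne_zero
  constructor
  · rintro ⟨hM, hH, hInd, hS⟩
    -- h(0) = 0
    have h0 : h (fun _ => (0:ℝ)) = 0 := by
      have := hH 0 (fun _ => 0) le_rfl inDom_zero_s11 (by simpa using inDom_zero_s11)
      simpa using this
    set e : A → A → ℝ := fun l b => if b = l then 1 else 0 with he
    have hedom : ∀ l, InDom (e l) := by
      intro l b; simp only [he]; split_ifs <;> norm_num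
    obtain ⟨a0⟩ := ‹Nonempty A›
    set κ := h (e a0) with hκdef
    -- all e l have the same value
    have hκ : ∀ l, h (e l) = κ := by
      intro l
      have hcomp : e a0 ∘ (Equiv.swap l a0) = e l := by
        funext x
        by_cases hx : x = l
        · simp [he, hx, Equiv.swap_apply_left]
        · by_cases hx0 : x = a0
          · subst hx0
            simp [he, Equiv.swap_apply_right, hx, Ne.symm hx]
          · simp [he, Equiv.swap_apply_of_ne_of_ne hx hx0, hx, hx0]
      have := hS (Equiv.swap l a0) (e a0) (hedom a0)
      rw [hcomp] at this
      exact this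
    -- single coordinate value
    have hsingle : ∀ (s : A → ℝ), InDom s → ∀ l, h (combine {l} s (fun _ => 0)) = s l * κ := by
      intro s hs l
      have eq : combine {l} s (fun _ => (0:ℝ)) = (fun b => s l * e l b) := by
        funext x
        by_cases hx : x = l <;> simp [combine, he, hx]
      have hdom2 : InDom (fun b => s l * e l b) := by
        intro b
        constructor
        · exact mul_nonneg (hs l).1 (hedom l b).1
        · exact mul_le_one₀ (hs l).2 (hedom l b).1 (hedom l b).2
      rw [eq, hH (s l) (e l) (hs l).1 (hedom l) hdom2, hκ l]
    -- h on the domain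
    have hmain : ∀ s : A → ℝ, InDom s → h s = κ * ∑ b, s b := by
      intro s hs
      have : combine Finset.univ s (fun _ => (0:ℝ)) = s := by
        funext x; simp [combine]
      calc h s = h (combine Finset.univ s (fun _ => 0)) := by rw [this]
        _ = ∑ l, h (combine {l} s (fun _ => 0)) := hsum_aux hInd h0 hs Finset.univ
        _ = ∑ l, s l * κ := by
            apply Finset.sum_congr rfl
            intro l _
            exact hsingle s hs l
        _ = κ * ∑ b, s b := by rw [Finset.mul_sum]; apply Finset.sum_congr rfl; intros; ring
    -- normalization gives κ = 1
    have hsumI : ∑ a, I a = κ * (Fintype.card A : ℝ) := by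
      calc ∑ a, I a = ∑ a, κ * ∑ b, AI a b := by
            apply Finset.sum_congr rfl
            intro a _
            rw [hI a, hmain _ (fun b => hAI01 a b)]
        _ = κ * ∑ a, ∑ b, AI a b := by rw [Finset.mul_sum]
        _ = κ * ∑ b, ∑ a, AI a b := by rw [Finset.sum_comm]
        _ = κ * (Fintype.card A : ℝ) := by
            simp [hAInorm]
    have hκ1 : κ = 1 := by
      rw [hsumI] at hInorm
      field_simp at hInorm
      linarith
    constructor
    · intro s hs
      rw [hmain s hs, hκ1, one_mul]
    · intro a
      rw [hI a, hmain _ (fun b => hAI01 a b), hκ1, one_mul]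
  · rintro ⟨hsum, hIa⟩
    refine ⟨?_, ?_, ?_, ?_⟩
    · intro s s' hs hs' hle
      rw [hsum s hs, hsum s' hs']
      exact Finset.sum_le_sum (fun l _ => hle l)
    · intro c s hc hs hcs
      rw [hsum _ hcs, hsum s hs, Finset.mul_sum]
    · intro J u u' v v' hu hu' hv hv'
      rw [hsum _ (inDom_combine hu hv), hsum _ (inDom_combine hu hv'),
          hsum _ (inDom_combine hu' hv), hsum _ (inDom_combine hu' hv')]
      simp only [combine]
      rw [Finset.sum_ite, Finset.sum_ite, Finset.sum_ite, Finset.sum_ite]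
      ring
    · intro π s hs
      have hs' : InDom (s ∘ π) := fun l => hs (π l)
      rw [hsum _ hs', hsum s hs]
      exact Equiv.sum_comp π s
end

section
/- The index I[d](a) = ∑_{p∈P_a} ∑_{b∈A} (1/P_b) ∑_{q∈P_b} n(p,q)/R_q (each author's unit of debt split equally among her papers, each paper's debt split equally among its references) satisfies ∑_{a∈A} I[d](a) = |A| whenever every paper has at least one reference in the database; consequently this index satisfies Field Comparability. -/
open Finset

variable {A P : Type*} [Fintype A] [DecidableEq A] [Fintype P] [DecidableEq P]

/-- number of references of paper `q` (`cite p q = true` means `q` cites `p`). -/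
def Rcount (cite : P → P → Bool) (q : P) : ℕ :=
  (univ.filter fun p => cite p q = true).card

/-- the comparable direct-influence index: each author's unit of debt is split
equally among her papers and each paper's debt equally among its references. -/
noncomputable def indexI (auth : P → A) (cite : P → P → Bool) (a : A) : ℝ :=
  ∑ p ∈ univ.filter fun p => auth p = a, ∑ b : A,
    (1 / ((univ.filter fun q => auth q = b).card : ℝ)) *
      ∑ q ∈ univ.filter fun q => auth q = b,
        (if cite p q = true then (1 : ℝ) / (Rcount cite q : ℝ) else 0)

lemma key (auth : P → A) (cite : P → P → Bool)
    (href : ∀ q : P, 0 < Rcount cite q) (hpa : ∀ b : A, ∃ p : P, auth p = b)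
    (S : Finset A) (hS : ∀ p q, cite p q = true → (auth p ∈ S ↔ auth q ∈ S)) :
    ∑ a ∈ S, indexI auth cite a = (S.card : ℝ) := by
  unfold indexI
  rw [Finset.sum_fiberwise_eq_sum_filter, Finset.sum_comm]
  have key2 : ∀ b : A,
      ∑ p ∈ univ.filter fun p => auth p ∈ S,
        (1 / ((univ.filter fun q => auth q = b).card : ℝ)) *
          ∑ q ∈ univ.filter fun q => auth q = b,
            (if cite p q = true then (1 : ℝ) / (Rcount cite q : ℝ) else 0)
      = if b ∈ S then 1 else 0 := by
    intro b
    rw [← Finset.mul_sum, Finset.sum_comm]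
    by_cases hb : b ∈ S
    · simp only [hb, if_true]
      have hq : ∀ q ∈ univ.filter fun q => auth q = b,
          (∑ p ∈ univ.filter fun p => auth p ∈ S,
            (if cite p q = true then (1 : ℝ) / (Rcount cite q : ℝ) else 0)) = 1 := by
        intro q hqm
        have hqb : auth q = b := (mem_filter.mp hqm).2
        rw [← Finset.sum_filter, Finset.filter_filter]
        have hset : (univ.filter fun p => auth p ∈ S ∧ cite p q = true)
            = univ.filter fun p => cite p q = true := by
          apply Finset.filter_congr
          intro p _
          constructor
          · rintro ⟨_, h⟩; exact h
          · intro h; exact ⟨(hS p q h).mpr (hqb ▸ hb), h⟩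
        rw [hset, Finset.sum_const, nsmul_eq_mul,
          show (univ.filter fun p => cite p q = true).card = Rcount cite q from rfl]
        have hR : (Rcount cite q : ℝ) ≠ 0 := by exact_mod_cast (href q).ne'
        field_simp
      rw [Finset.sum_congr rfl hq, Finset.sum_const, nsmul_eq_mul, mul_one]
      have hne : ((univ.filter fun q => auth q = b).card : ℝ) ≠ 0 := by
        obtain ⟨p, hp⟩ := hpa b
        have : p ∈ univ.filter fun q => auth q = b := by simp [hp]
        have := Finset.card_pos.mpr ⟨p, this⟩
        exact_mod_cast this.ne'
      field_simp
    · simp only [hb, if_false]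
      have : ∀ q ∈ univ.filter fun q => auth q = b,
          (∑ p ∈ univ.filter fun p => auth p ∈ S,
            (if cite p q = true then (1 : ℝ) / (Rcount cite q : ℝ) else 0)) = 0 := by
        intro q hqm
        have hqb : auth q = b := (mem_filter.mp hqm).2
        apply Finset.sum_eq_zero
        intro p hp
        have hpS : auth p ∈ S := (mem_filter.mp hp).2
        by_cases hc : cite p q = true
        · exact absurd ((hS p q hc).mp hpS) (hqb ▸ hb)
        · simp [hc]
      rw [Finset.sum_congr rfl this, Finset.sum_const]
      simp
  rw [Finset.sum_congr rfl fun b _ => key2 b, Finset.sum_ite_mem]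
  simp

/-- if every paper has at least one reference (and every author at
least one paper), the index sums to the number of authors, and consequently it
satisfies Field Comparability. -/
theorem stmt13 (auth : P → A) (cite : P → P → Bool)
    (href : ∀ q : P, 0 < Rcount cite q) (hpa : ∀ b : A, ∃ p : P, auth p = b) :
    (∑ a, indexI auth cite a = (Fintype.card A : ℝ)) ∧
    (∀ F : A → Bool, (∃ a, F a = true) → (∃ a, F a = false) →
      (∀ p q : P, cite p q = true → F (auth p) = F (auth q)) →
      (1 / ((univ.filter fun a => F a = true).card : ℝ)) *
          ∑ a ∈ univ.filter fun a => F a = true, indexI auth cite a =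
        (1 / ((univ.filter fun a => F a = false).card : ℝ)) *
          ∑ a ∈ univ.filter fun a => F a = false, indexI auth cite a) := by
  constructor
  · have := key auth cite href hpa univ (fun p q _ => by simp)
    exact this
  · intro F ht hf hcross
    have h1 := key auth cite href hpa (univ.filter fun a => F a = true)
      (fun p q hc => by simp [hcross p q hc])
    have h2 := key auth cite href hpa (univ.filter fun a => F a = false)
      (fun p q hc => by simp [hcross p q hc])
    rw [h1, h2]
    obtain ⟨a, ha⟩ := ht
    obtain ⟨a', ha'⟩ := hf
    have c1 : ((univ.filter fun a => F a = true).card : ℝ) ≠ 0 := by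
      have hm : a ∈ univ.filter fun b => F b = true :=
        Finset.mem_filter.mpr ⟨Finset.mem_univ a, ha⟩
      have := Finset.card_pos.mpr ⟨a, hm⟩
      exact_mod_cast this.ne'
    have c2 : ((univ.filter fun a => F a = false).card : ℝ) ≠ 0 := by
      have hm : a' ∈ univ.filter fun b => F b = false :=
        Finset.mem_filter.mpr ⟨Finset.mem_univ a', ha'⟩
      have := Finset.card_pos.mpr ⟨a', hm⟩
      exact_mod_cast this.ne'
    field_simp
end

section
/- If a neutral measure of influence I on bibliographic databases satisfies Separability and Author Anonymity, then it satisfies Extended Author Anonymity: for any two databases d = (A, P_A, n) and d' = (A', P'_{A'}, n) in the domain with the same total set of papers P = P' and the same citation network n, and any author a ∈ A ∩ A' with P_a = P'_a, one has I[d'](a) = I[d](a), even when |A| ≠ |A'|. -/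
open Finset

/-- A valid bibliographic database: single-authored papers via `auth`, no
self-citation (`cite p q = true` means `q` cites `p`), every author cites a
paper of another author. -/
def ValidDB {A P : Type} (auth : P → A) (cite : P → P → Bool) : Prop :=
  (∀ p q : P, auth p = auth q → cite p q = false) ∧
  (∀ a : A, ∃ q p : P, auth q = a ∧ auth p ≠ auth q ∧ cite p q = true)

/-- A measure of influence assigns a score to every author of every database. -/
def Measure : Type 1 :=
  ∀ (A P : Type) [Fintype A] [DecidableEq A] [Fintype P] [DecidableEq P],
    (P → A) → (P → P → Bool) → A → ℝ

/-- Neutrality: scores are invariant under relabeling authors and papers. -/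
def Neutral (I : Measure) : Prop :=
  ∀ (A A' P P' : Type) [Fintype A] [DecidableEq A] [Fintype A'] [DecidableEq A']
    [Fintype P] [DecidableEq P] [Fintype P'] [DecidableEq P']
    (auth : P → A) (cite : P → P → Bool) (e : A ≃ A') (σ : P ≃ P') (a : A),
    I A' P' (fun p => e (auth (σ.symm p)))
      (fun p q => cite (σ.symm p) (σ.symm q)) (e a) = I A P auth cite a

/-- the disjoint union of two citation networks, with no cross citations. -/
def sumCite {P P' : Type} (cite : P → P → Bool) (cite' : P' → P' → Bool) :
    P ⊕ P' → P ⊕ P' → Bool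
  | Sum.inl p, Sum.inl q => cite p q
  | Sum.inr p, Sum.inr q => cite' p q
  | _, _ => false

/-- Separability: adding a disjoint database does not change scores. -/
def Separability (I : Measure) : Prop :=
  ∀ (A A' P P' : Type) [Fintype A] [DecidableEq A] [Fintype A'] [DecidableEq A']
    [Fintype P] [DecidableEq P] [Fintype P'] [DecidableEq P']
    (auth : P → A) (cite : P → P → Bool) (auth' : P' → A') (cite' : P' → P' → Bool),
    ValidDB auth cite → ValidDB auth' cite' →
    ∀ a : A, I (A ⊕ A') (P ⊕ P') (Sum.map auth auth') (sumCite cite cite')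
        (Sum.inl a) = I A P auth cite a

/-- Author Anonymity: with the same author set, paper set and network, if `a`
keeps the same papers, reassigning the other papers does not change `a`'s score. -/
def AuthorAnonymity (I : Measure) : Prop :=
  ∀ (A P : Type) [Fintype A] [DecidableEq A] [Fintype P] [DecidableEq P]
    (auth auth' : P → A) (cite : P → P → Bool),
    ValidDB auth cite → ValidDB auth' cite →
    ∀ a : A, (∀ p : P, auth p = a ↔ auth' p = a) →
      I A P auth' cite a = I A P auth cite a

/-- a neutral measure of influence satisfying Separability and
Author Anonymity satisfies Extended Author Anonymity: if two databases have the
same papers and network, and `a` (in the first) and `a'` (in the second) have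
the same set of papers, their scores coincide, even when the two author sets
have different sizes. -/
theorem stmt15 (I : Measure) (hneu : Neutral I) (hsep : Separability I)
    (haa : AuthorAnonymity I) :
    ∀ (A A' P : Type) [Fintype A] [DecidableEq A] [Fintype A'] [DecidableEq A']
      [Fintype P] [DecidableEq P]
      (auth : P → A) (auth' : P → A') (cite : P → P → Bool),
      ValidDB auth cite → ValidDB auth' cite →
      ∀ (a : A) (a' : A'), (∀ p : P, auth p = a ↔ auth' p = a') →
        I A P auth cite a = I A' P auth' cite a' := by
  intro A A' P _ _ _ _ _ _ auth auth' cite hd hd' a a' hpa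
  classical
  -- the merged authorship functions
  set C : P ⊕ P → P ⊕ P → Bool := sumCite cite cite with hC
  set auth1 : P ⊕ P → A ⊕ A' := Sum.map auth auth' with hauth1
  set auth2 : P ⊕ P → A ⊕ A' := fun p => match p with
    | Sum.inl p => if auth p = a then Sum.inl a else Sum.inr (auth' p)
    | Sum.inr p => if auth' p = a' then Sum.inr a' else Sum.inl (auth p)
    with hauth2
  have ha2l : ∀ p : P, auth2 (Sum.inl p)
      = if auth p = a then Sum.inl a else Sum.inr (auth' p) := fun p => rfl
  have ha2r : ∀ p : P, auth2 (Sum.inr p)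
      = if auth' p = a' then Sum.inr a' else Sum.inl (auth p) := fun p => rfl
  have hvd1 : ValidDB auth1 C := by
    constructor
    · rintro (p | p) (q | q) h
      · exact hd.1 p q (by simpa [hauth1] using h)
      · rfl
      · rfl
      · exact hd'.1 p q (by simpa [hauth1] using h)
    · rintro (b | b)
      · obtain ⟨q, p, hq, hne, hc⟩ := hd.2 b
        exact ⟨Sum.inl q, Sum.inl p, by simp [hauth1, hq],
          by simp [hauth1]; exact hne, hc⟩
      · obtain ⟨q, p, hq, hne, hc⟩ := hd'.2 b
        exact ⟨Sum.inr q, Sum.inr p, by simp [hauth1, hq],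
          by simp [hauth1]; exact hne, hc⟩
  have hvd2 : ValidDB auth2 C := by
    constructor
    · rintro (p | p) (q | q) h
      · rw [ha2l p, ha2l q] at h
        by_cases hp : auth p = a <;> by_cases hq : auth q = a <;>
          simp [hp, hq] at h
        · exact hd.1 p q (hp.trans hq.symm)
        · exact hd'.1 p q h
      · rfl
      · rfl
      · rw [ha2r p, ha2r q] at h
        by_cases hp : auth' p = a' <;> by_cases hq : auth' q = a' <;>
          simp [hp, hq] at h
        · exact hd'.1 p q (hp.trans hq.symm)
        · exact hd.1 p q h
    · rintro (b | b)
      · by_cases hb : b = a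
        · subst hb
          obtain ⟨q, p, hq, hne, hc⟩ := hd.2 b
          refine ⟨Sum.inl q, Sum.inl p, by simp [ha2l, hq], ?_, hc⟩
          rw [ha2l p, ha2l q]
          have hpne : auth p ≠ b := fun h => hne (h.trans hq.symm)
          simp [hpne, hq]
        · obtain ⟨q, p, hq, hne, hc⟩ := hd.2 b
          have hq' : auth' q ≠ a' := fun h => hb ((hpa q).2 h ▸ hq.symm ▸ rfl)
          -- auth q = b ≠ a
          have hqa : auth q ≠ a := fun h => hb (hq ▸ h ▸ rfl)
          refine ⟨Sum.inr q, Sum.inr p, ?_, ?_, hc⟩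
          · rw [ha2r q]; simp [hq', hq]
          · rw [ha2r p, ha2r q]
            by_cases hp : auth' p = a' <;> simp [hp, hq', hq]
            exact fun h => hne (h.trans hq.symm) |>.elim
      · by_cases hb : b = a'
        · subst hb
          obtain ⟨q, p, hq, hne, hc⟩ := hd'.2 b
          have hpne : auth' p ≠ b := fun h => hne (h.trans hq.symm)
          refine ⟨Sum.inr q, Sum.inr p, by rw [ha2r q]; simp [hq], ?_, hc⟩
          rw [ha2r p, ha2r q]; simp [hpne, hq]
        · obtain ⟨q, p, hq, hne, hc⟩ := hd'.2 b
          have hqa : auth q ≠ a := fun h => hb (((hpa q).1 h).symm ▸ hq.symm ▸ rfl)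
          refine ⟨Sum.inl q, Sum.inl p, ?_, ?_, hc⟩
          · rw [ha2l q]; simp [hqa, hq]
          · rw [ha2l p, ha2l q]
            by_cases hp : auth p = a <;> simp [hp, hqa, hq]
            exact fun h => hne (h.trans hq.symm) |>.elim
  -- Step A : separability on the left
  have hA : I (A ⊕ A') (P ⊕ P) auth1 C (Sum.inl a) = I A P auth cite a :=
    hsep A A' P P auth cite auth' cite hd hd' a
  -- Step B : author anonymity inside the merged database
  have hsame : ∀ p : P ⊕ P, auth1 p = Sum.inl a ↔ auth2 p = Sum.inl a := by
    rintro (p | p)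
    · rw [ha2l p]
      by_cases hp : auth p = a <;> simp [hauth1, hp]
    · rw [ha2r p]
      by_cases hp : auth' p = a' <;> simp [hauth1, hp]
      exact fun h => hp ((hpa p).1 h)
  have hB : I (A ⊕ A') (P ⊕ P) auth2 C (Sum.inl a)
      = I (A ⊕ A') (P ⊕ P) auth1 C (Sum.inl a) :=
    haa (A ⊕ A') (P ⊕ P) auth1 auth2 C hvd1 hvd2 (Sum.inl a) hsame
  -- Step C : neutrality with the swap (inl a) ↔ (inr a') and paper-copy swap
  have hC2 : I (A ⊕ A') (P ⊕ P) auth1 C (Sum.inr a')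
      = I (A ⊕ A') (P ⊕ P) auth2 C (Sum.inl a) := by
    have h := hneu (A ⊕ A') (A ⊕ A') (P ⊕ P) (P ⊕ P) auth2 C
      (Equiv.swap (Sum.inl a) (Sum.inr a' : A ⊕ A')) (Equiv.sumComm P P)
      (Sum.inl a)
    have hfun : (fun p => Equiv.swap (Sum.inl a) (Sum.inr a' : A ⊕ A')
        (auth2 ((Equiv.sumComm P P).symm p))) = auth1 := by
      funext p
      rcases p with p | p
      · show Equiv.swap (Sum.inl a) (Sum.inr a' : A ⊕ A') (auth2 (Sum.inr p)) = _
        rw [ha2r p]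
        by_cases hp : auth' p = a'
        · have : auth p = a := (hpa p).2 hp
          simp [hp, hauth1, this]
        · have hpA : auth p ≠ a := fun h => hp ((hpa p).1 h)
          rw [if_neg hp, Equiv.swap_apply_of_ne_of_ne (by simp [hpA]) (by simp)]
          simp [hauth1]
      · show Equiv.swap (Sum.inl a) (Sum.inr a' : A ⊕ A') (auth2 (Sum.inl p)) = _
        rw [ha2l p]
        by_cases hp : auth p = a
        · have : auth' p = a' := (hpa p).1 hp
          simp [hp, hauth1, this]
        · have hpA : auth' p ≠ a' := fun h => hp ((hpa p).2 h)
          rw [if_neg hp, Equiv.swap_apply_of_ne_of_ne (by simp) (by simp [hpA])]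
          simp [hauth1]
    have hcit : (fun p q => C ((Equiv.sumComm P P).symm p)
        ((Equiv.sumComm P P).symm q)) = C := by
      funext p q
      rcases p with p | p <;> rcases q with q | q <;> rfl
    rw [hfun, hcit] at h
    simpa using h
  -- Step D : separability on the right, transported by neutrality
  have hD0 : I (A' ⊕ A) (P ⊕ P) (Sum.map auth' auth) (sumCite cite cite)
      (Sum.inl a') = I A' P auth' cite a' :=
    hsep A' A P P auth' cite auth cite hd' hd a'
  have hD : I (A ⊕ A') (P ⊕ P) auth1 C (Sum.inr a') = I A' P auth' cite a' := by
    have h := hneu (A' ⊕ A) (A ⊕ A') (P ⊕ P) (P ⊕ P) (Sum.map auth' auth)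
      (sumCite cite cite) (Equiv.sumComm A' A) (Equiv.sumComm P P) (Sum.inl a')
    have hfun : (fun p => Equiv.sumComm A' A
        (Sum.map auth' auth ((Equiv.sumComm P P).symm p))) = auth1 := by
      funext p
      rcases p with p | p <;> rfl
    have hcit : (fun p q => sumCite cite cite ((Equiv.sumComm P P).symm p)
        ((Equiv.sumComm P P).symm q)) = C := by
      funext p q
      rcases p with p | p <;> rcases q with q | q <;> rfl
    rw [hfun, hcit] at h
    exact h.trans hD0
  rw [← hA, ← hB, ← hC2, hD]
end
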